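/- arXiv:2203.04215 — 4 statements merged into one kernel-verified Lean document; each statement's English description precedes it below -/
import Mathlib

section
/- If A is an eventually positive matrix (there exists t0 such that A^t has all entries strictly positive for all integers t ≥ t0), then any strictly positive eigenvector of A is a scalar multiple of the right Perron eigenvector associated with the spectral radius ρ(A). -/
open Matrix Filter Polynomial Topology

noncomputable section

/-- Complexification of a real matrix. -/
def cmat {n : ℕ} (A : Matrix (Fin n) (Fin n) ℝ) : Matrix (Fin n) (Fin n) ℂ :=
  A.map (algebraMap ℝ ℂ)

/-- `A` is eventually positive: all sufficiently large powers are entrywise positive. -/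
def EvPos {n : ℕ} (A : Matrix (Fin n) (Fin n) ℝ) : Prop :=
  ∃ t0 : ℕ, ∀ t ≥ t0, ∀ i j, 0 < (A ^ t) i j

/-- `A` is eventually exponentially positive: `e^{At}` is entrywise positive for all large `t`. -/
def EvExpPos {n : ℕ} (A : Matrix (Fin n) (Fin n) ℝ) : Prop :=
  ∃ t0 : ℝ, 0 ≤ t0 ∧ ∀ t ≥ t0, ∀ i j, 0 < (NormedSpace.exp (t • A)) i j

/-- Spectral radius of a real matrix, via its complex spectrum. -/
def specRad {n : ℕ} (A : Matrix (Fin n) (Fin n) ℝ) : ℝ :=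
  sSup ((fun z : ℂ => ‖z‖) '' spectrum ℂ (cmat A))

/-- `μ` is a simple eigenvalue of `A`: it has multiplicity one as a root of the
characteristic polynomial. -/
def SimpleEig {n : ℕ} (A : Matrix (Fin n) (Fin n) ℝ) (μ : ℂ) : Prop :=
  (Matrix.charpoly (cmat A)).roots.count μ = 1

/-- Marginal (continuous-time) stability: every eigenvalue has nonpositive real part, and
eigenvalues on the imaginary axis are simple roots of the minimal polynomial. -/
def MarginallyStable {n : ℕ} (A : Matrix (Fin n) (Fin n) ℝ) : Prop :=
  ∀ μ ∈ spectrum ℂ (cmat A), μ.re ≤ 0 ∧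
    (μ.re = 0 → Polynomial.rootMultiplicity μ (minpoly ℂ (cmat A)) = 1)

/-- Marginal Schur stability: every eigenvalue has modulus at most one, and eigenvalues of
modulus one are simple roots of the minimal polynomial. -/
def MarginallySchurStable {n : ℕ} (A : Matrix (Fin n) (Fin n) ℝ) : Prop :=
  ∀ μ ∈ spectrum ℂ (cmat A), ‖μ‖ ≤ 1 ∧
    (‖μ‖ = 1 → Polynomial.rootMultiplicity μ (minpoly ℂ (cmat A)) = 1)

/-- Irreducibility: no nontrivial proper index subset `S` with `A i j = 0` for all
`i ∈ S`, `j ∉ S` (equivalently, no permutation puts `A` in block triangular form). -/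
def MatIrreducible {n : ℕ} (A : Matrix (Fin n) (Fin n) ℝ) : Prop :=
  ¬ ∃ S : Finset (Fin n), S.Nonempty ∧ S ≠ Finset.univ ∧ ∀ i ∈ S, ∀ j ∉ S, A i j = 0

/-- The all-ones vector. -/
def ones (n : ℕ) : Fin n → ℝ := fun _ => 1

/-! Eigenvectors of `A` are eigenvectors of `B = A ^ t`, which has positive entries for
large `t`. For positive eigenvectors `B v = r v`, `B w = s w`, let `c = min wᵢ / vᵢ`, attained
at `i₀`. Then `u = w - c • v ≥ 0` vanishes at `i₀`; if `u ≠ 0`, positivity of `B` gives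
`0 < (B u)ᵢ₀ = (s - r) wᵢ₀`, so `r < s`. Exchanging `v` and `w` gives `s < r` as well, a
contradiction; hence `u = 0`. -/

lemma Matrix.mulVec_pow_of_mulVec_eq_smul {ι R : Type*} [Fintype ι] [DecidableEq ι]
    [CommSemiring R] {A : Matrix ι ι R} {v : ι → R} {μ : R} (h : A *ᵥ v = μ • v) (t : ℕ) :
    (A ^ t) *ᵥ v = μ ^ t • v := by
  induction t with
  | zero => simp
  | succ t ih =>
    rw [pow_succ', ← mulVec_mulVec, ih, mulVec_smul, h, smul_smul, ← pow_succ]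

section PositiveMatrix

variable {ι 𝕜 : Type*} [Fintype ι] [Field 𝕜] [LinearOrder 𝕜] [IsStrictOrderedRing 𝕜]

lemma Matrix.mulVec_pos_of_pos_of_nonneg {B : Matrix ι ι 𝕜} (hB : ∀ i j, 0 < B i j)
    {u : ι → 𝕜} (hu : ∀ i, 0 ≤ u i) (hu0 : u ≠ 0) (i : ι) : 0 < (B *ᵥ u) i := by
  obtain ⟨j, hj⟩ := Function.ne_iff.mp hu0
  exact Finset.sum_pos' (fun k _ => mul_nonneg (hB i k).le (hu k))
    ⟨j, Finset.mem_univ j, mul_pos (hB i j) ((hu j).lt_of_ne' hj)⟩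

lemma Matrix.eq_smul_or_lt_of_pos [Nonempty ι] {B : Matrix ι ι 𝕜} (hB : ∀ i j, 0 < B i j)
    {v w : ι → 𝕜} (hv : ∀ i, 0 < v i) (hw : ∀ i, 0 ≤ w i) {r s : 𝕜}
    (hBv : B *ᵥ v = r • v) (hBw : B *ᵥ w = s • w) :
    (∃ c : 𝕜, w = c • v) ∨ r < s := by
  obtain ⟨i₀, -, hmin⟩ :=
    Finset.exists_min_image Finset.univ (fun i => w i / v i) Finset.univ_nonempty
  set c := w i₀ / v i₀
  have hu : ∀ i, 0 ≤ (w - c • v) i := fun i => by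
    simpa [sub_nonneg, ← le_div_iff₀ (hv i)] using hmin i (Finset.mem_univ i)
  have hcv : c * v i₀ = w i₀ := div_mul_cancel₀ _ (hv i₀).ne'
  by_cases hu0 : w - c • v = 0
  · exact Or.inl ⟨c, sub_eq_zero.mp hu0⟩
  have hBu : (B *ᵥ (w - c • v)) i₀ = (s - r) * w i₀ := by
    simp only [mulVec_sub, mulVec_smul, hBv, hBw, Pi.sub_apply, Pi.smul_apply, smul_eq_mul]
    rw [← hcv]
    ring
  have hpos := mulVec_pos_of_pos_of_nonneg hB hu hu0 i₀
  rw [hBu] at hpos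
  exact Or.inr (sub_pos.mp (pos_of_mul_pos_left hpos (hw i₀)))

lemma Matrix.exists_eq_smul_of_pos_eigenvectors {B : Matrix ι ι 𝕜} (hB : ∀ i j, 0 < B i j)
    {v w : ι → 𝕜} (hv : ∀ i, 0 < v i) (hw : ∀ i, 0 < w i) {r s : 𝕜}
    (hBv : B *ᵥ v = r • v) (hBw : B *ᵥ w = s • w) : ∃ c : 𝕜, w = c • v := by
  rcases isEmpty_or_nonempty ι with hι | hι
  · exact ⟨0, Subsingleton.elim _ _⟩
  rcases eq_smul_or_lt_of_pos hB hv (fun i => (hw i).le) hBv hBw with h | hlt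
  · exact h
  rcases eq_smul_or_lt_of_pos hB hw (fun i => (hv i).le) hBw hBv with ⟨d, rfl⟩ | hgt
  · have hd : d ≠ 0 := by
      rintro rfl
      simpa using hv hι.some
    exact ⟨d⁻¹, by rw [smul_smul, inv_mul_cancel₀ hd, one_smul]⟩
  · exact absurd hlt hgt.not_gt

end PositiveMatrix

/-- Any strictly positive eigenvector of an eventually positive matrix is a scalar multiple
of the right Perron eigenvector associated with the spectral radius. -/
theorem stmt0 {n : ℕ} (A : Matrix (Fin n) (Fin n) ℝ) (hA : EvPos A)
    (v : Fin n → ℝ) (hv : ∀ i, 0 < v i) (hAv : A *ᵥ v = specRad A • v)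
    (w : Fin n → ℝ) (hw : ∀ i, 0 < w i) (μ : ℝ) (hAw : A *ᵥ w = μ • w) :
    ∃ c : ℝ, w = c • v := by
  obtain ⟨t₀, ht₀⟩ := hA
  exact exists_eq_smul_of_pos_eigenvectors (ht₀ t₀ le_rfl) hv hw
    (mulVec_pow_of_mulVec_eq_smul hAv t₀) (mulVec_pow_of_mulVec_eq_smul hAw t₀)
end
end

section
/- Let L ∈ ℝ^{n×n} satisfy L·1 = 0. If the symmetric part L_s = (L+L^T)/2 is positive semidefinite with dim ker L_s = 1, then L is weight balanced (L^T·1 = 0), dim ker L = 1, and −L is marginally stable. -/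
open Matrix Filter Polynomial Topology

noncomputable section

/-!
If `Lₛ` is positive semidefinite and `L x = 0`, then `xᵀ Lₛ x = xᵀ L x = 0`, so `Lₛ x = 0` and
`Lᵀ x = 2 Lₛ x - L x = 0`. For `x = 1` this is weight balance; it also gives `ker L ≤ ker Lₛ`,
which together with `1 ∈ ker L` pins down `dim ker L = 1`.

For stability, complexify: `A = -L` has `-(A + Aᴴ) = 2 Lₛ ⪰ 0`, and an eigenpair `A v = μ v` gives
`v* (A + Aᴴ) v = 2 Re μ ‖v‖²`, so `Re μ ≤ 0`. If `Re μ = 0` the quadratic form vanishes at `v`,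
hence `(A + Aᴴ) v = 0` and `Aᴴ v = μ̄ v`; this left eigenvector rules out Jordan chains of length
two at `μ`, i.e. `μ` is a simple root of the minimal polynomial.
-/

open scoped ComplexOrder

namespace Module.End

theorem rootMultiplicity_minpoly_eq_one {K V : Type*} [Field K] [AddCommGroup V] [Module K V]
    [FiniteDimensional K V] {f : End K V} {μ : K} (hμ : f.HasEigenvalue μ)
    (h : ∀ v, (f - algebraMap K (End K V) μ) ((f - algebraMap K (End K V) μ) v) = 0 →
      (f - algebraMap K (End K V) μ) v = 0) :
    rootMultiplicity μ (minpoly K f) = 1 := by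
  have hp0 : minpoly K f ≠ 0 := minpoly.ne_zero (Algebra.IsIntegral.isIntegral f)
  refine le_antisymm ?_ ((rootMultiplicity_pos hp0).mpr (hasEigenvalue_iff_isRoot.mp hμ))
  -- If `(X - μ)² q` is the minimal polynomial, then `(X - μ) q` already annihilates `f`.
  by_contra! h2
  obtain ⟨q, hq⟩ : (X - C μ) ^ 2 ∣ minpoly K f := (le_rootMultiplicity_iff hp0).mp h2
  have hann : aeval f ((X - C μ) * q) = 0 := by
    ext v
    have h0 := congr($(minpoly.aeval K f) v)
    rw [hq] at h0
    simpa [pow_two, mul_assoc] using h (aeval f q v) (by simpa [pow_two, mul_assoc] using h0)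
  have hq0 : q ≠ 0 := right_ne_zero_of_mul (hq ▸ hp0)
  have hdvd := minpoly.dvd K f hann
  rw [hq, pow_two, mul_assoc, mul_dvd_mul_iff_left (X_sub_C_ne_zero μ)] at hdvd
  have := natDegree_le_of_dvd hdvd hq0
  rw [natDegree_mul (X_sub_C_ne_zero μ) hq0, natDegree_X_sub_C] at this
  omega

end Module.End

namespace Matrix

section

variable {ι : Type*} [Fintype ι] {A : Matrix ι ι ℂ} {μ : ℂ} {v : ι → ℂ}

theorem star_dotProduct_add_conjTranspose_mulVec (hv : A *ᵥ v = μ • v) :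
    star v ⬝ᵥ ((A + Aᴴ) *ᵥ v) = 2 * μ.re * (star v ⬝ᵥ v) := by
  rw [add_mulVec, dotProduct_add, dotProduct_mulVec _ Aᴴ, ← star_mulVec, hv, dotProduct_smul,
    star_smul, smul_dotProduct, smul_eq_mul, smul_eq_mul, ← add_mul, Complex.star_def,
    Complex.add_conj]
  push_cast
  ring

theorem re_nonpos_of_mulVec_eq_smul (hA : (-(A + Aᴴ)).PosSemidef) (hv : A *ᵥ v = μ • v)
    (hv0 : v ≠ 0) : μ.re ≤ 0 := by
  have hq := hA.dotProduct_mulVec_nonneg v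
  rw [neg_mulVec, dotProduct_neg, star_dotProduct_add_conjTranspose_mulVec hv, neg_nonneg] at hq
  have hpos : 0 < star v ⬝ᵥ v := dotProduct_star_self_pos_iff.mpr hv0
  by_contra! hre
  exact hq.not_gt (mul_pos (mul_pos two_pos (Complex.zero_lt_real.mpr hre)) hpos)

theorem conjTranspose_mulVec_eq_star_smul (hA : (-(A + Aᴴ)).PosSemidef) (hv : A *ᵥ v = μ • v)
    (hμ : μ.re = 0) : Aᴴ *ᵥ v = star μ • v := by
  have hq : star v ⬝ᵥ ((-(A + Aᴴ)) *ᵥ v) = 0 := by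
    rw [neg_mulVec, dotProduct_neg, star_dotProduct_add_conjTranspose_mulVec hv, hμ]
    simp
  have h0 := (hA.dotProduct_mulVec_zero_iff v).mp hq
  rw [neg_mulVec, neg_eq_zero, add_mulVec, hv, add_eq_zero_iff_eq_neg'] at h0
  rw [h0, ← neg_smul]
  congr 1
  apply Complex.ext <;> simp [hμ]

theorem mulVec_sub_smul_eq_zero (hA : (-(A + Aᴴ)).PosSemidef)
    (hμ : μ.re = 0) {w : ι → ℂ} (hw : A *ᵥ (A *ᵥ w - μ • w) = μ • (A *ᵥ w - μ • w)) :
    A *ᵥ w - μ • w = 0 := by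
  -- `u` is an eigenvector of `Aᴴ` for `star μ`, so `u* u = u* (A - μ) w = ((Aᴴ - star μ) u)* w = 0`.
  set u := A *ᵥ w - μ • w with hu
  have hu' : star u ᵥ* A = μ • star u := by
    rw [← conjTranspose_conjTranspose A, ← star_mulVec, conjTranspose_mulVec_eq_star_smul hA hw hμ,
      star_smul, star_star]
  refine dotProduct_star_self_eq_zero.mp ?_
  calc star u ⬝ᵥ u = star u ⬝ᵥ (A *ᵥ w) - μ * (star u ⬝ᵥ w) := by
        rw [hu, dotProduct_sub, dotProduct_smul, smul_eq_mul]
    _ = 0 := by rw [dotProduct_mulVec, hu', smul_dotProduct, smul_eq_mul, sub_self]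

theorem re_nonpos_and_rootMultiplicity_minpoly_eq_one [DecidableEq ι]
    (hA : (-(A + Aᴴ)).PosSemidef) (hμ : μ ∈ spectrum ℂ A) :
    μ.re ≤ 0 ∧ (μ.re = 0 → rootMultiplicity μ (minpoly ℂ A) = 1) := by
  rw [← spectrum_toLin', ← Module.End.hasEigenvalue_iff_mem_spectrum] at hμ
  obtain ⟨v, hv⟩ := hμ.exists_hasEigenvector
  have hAv : A *ᵥ v = μ • v := by simpa using hv.apply_eq_smul
  refine ⟨re_nonpos_of_mulVec_eq_smul hA hAv hv.2, fun hre => ?_⟩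
  rw [← minpoly_toLin']
  refine Module.End.rootMultiplicity_minpoly_eq_one hμ fun w hw => ?_
  simp only [LinearMap.sub_apply, toLin'_apply, Module.algebraMap_end_apply] at hw ⊢
  exact mulVec_sub_smul_eq_zero hA hre (sub_eq_zero.mp hw)

end

section

variable {ι : Type*} [Fintype ι] {L : Matrix ι ι ℝ} {x : ι → ℝ}

theorem symmPart_mulVec_eq_zero (hL : (((1 : ℝ) / 2) • (L + Lᵀ)).PosSemidef)
    (hx : L *ᵥ x = 0) : (((1 : ℝ) / 2) • (L + Lᵀ)) *ᵥ x = 0 := by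
  refine (hL.dotProduct_mulVec_zero_iff x).mp ?_
  rw [star_trivial, smul_mulVec, add_mulVec, dotProduct_smul, dotProduct_add,
    dotProduct_mulVec x Lᵀ, vecMul_transpose, hx]
  simp

theorem transpose_mulVec_eq_zero (hL : (((1 : ℝ) / 2) • (L + Lᵀ)).PosSemidef)
    (hx : L *ᵥ x = 0) : Lᵀ *ᵥ x = 0 := by
  have h := symmPart_mulVec_eq_zero hL hx
  rwa [smul_mulVec, add_mulVec, hx, zero_add, smul_eq_zero_iff_right (by norm_num)] at h

end

end Matrix

theorem cmat_transpose {n : ℕ} (A : Matrix (Fin n) (Fin n) ℝ) : cmat Aᵀ = (cmat A)ᴴ := by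
  ext i j
  simp [cmat]

open scoped MatrixOrder in
theorem Matrix.PosSemidef.cmat {n : ℕ} {S : Matrix (Fin n) (Fin n) ℝ} (hS : S.PosSemidef) :
    (cmat S).PosSemidef := by
  obtain ⟨B, rfl⟩ := CStarAlgebra.nonneg_iff_eq_star_mul_self.mp hS.nonneg
  rw [_root_.cmat, star_eq_conjTranspose, Matrix.map_mul, ← _root_.cmat, ← _root_.cmat,
    conjTranspose_eq_transpose_of_trivial, cmat_transpose]
  exact posSemidef_conjTranspose_mul_self _

theorem marginallyStable_neg {n : ℕ} {L : Matrix (Fin n) (Fin n) ℝ}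
    (hL : (((1 : ℝ) / 2) • (L + Lᵀ)).PosSemidef) : MarginallyStable (-L) := by
  have hsum : (L + Lᵀ).PosSemidef := by
    simpa [smul_smul] using hL.smul (zero_le_two (α := ℝ))
  have h : -(cmat (-L) + (cmat (-L))ᴴ) = cmat (L + Lᵀ) := by
    ext i j
    simp [cmat, add_comm]
  intro μ hμ
  exact re_nonpos_and_rootMultiplicity_minpoly_eq_one (h ▸ hsum.cmat) hμ

/-- If the symmetric part of `L` is psd with one-dimensional kernel, then `L` is weight
balanced, `ker L` is one-dimensional, and `-L` is marginally stable. -/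
theorem stmt9 {n : ℕ} (L : Matrix (Fin n) (Fin n) ℝ) (hL : L *ᵥ ones n = 0)
    (hpsd : (((1 : ℝ) / 2) • (L + Lᵀ)).PosSemidef)
    (hcor : Module.finrank ℝ (LinearMap.ker (((1 : ℝ) / 2) • (L + Lᵀ)).mulVecLin) = 1) :
    Lᵀ *ᵥ ones n = 0 ∧ Module.finrank ℝ (LinearMap.ker L.mulVecLin) = 1 ∧
      MarginallyStable (-L) := by
  refine ⟨transpose_mulVec_eq_zero hpsd hL, ?_, marginallyStable_neg hpsd⟩
  have hker : LinearMap.ker L.mulVecLin ≤ LinearMap.ker (((1 : ℝ) / 2) • (L + Lᵀ)).mulVecLin :=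
    fun _ hx => symmPart_mulVec_eq_zero hpsd hx
  have hn : 1 ≤ n := by simpa [hcor] using Submodule.finrank_le (LinearMap.ker
    (((1 : ℝ) / 2) • (L + Lᵀ)).mulVecLin)
  have hones : ones n ≠ 0 := fun h => one_ne_zero (congrFun h ⟨0, hn⟩)
  refine le_antisymm (hcor ▸ Submodule.finrank_mono hker) ?_
  exact Module.finrank_pos_iff_exists_ne_zero.mpr
    ⟨⟨ones n, hL⟩, fun h => hones congr(Subtype.val $h)⟩
end
end

section
/- If L ∈ ℝ^{n×n} with L·1 = 0 is such that −L is eventually exponentially positive, then L is irreducible (there is no permutation matrix P such that P^T L P is block upper triangular with nontrivial square diagonal blocks). -/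
open Matrix Filter Polynomial Topology

noncomputable section

/-! A zero block `S × Sᶜ` of `L` survives negation, scaling and the exponential (block
triangular matrices form a closed subalgebra), so it would give a zero entry of `exp (t • -L)`. -/

namespace Matrix

variable {m R : Type*}

theorem blockTriangular_mem_iff [Zero R] {M : Matrix m m R} {s : Set m} :
    M.BlockTriangular (· ∈ s) ↔ ∀ i ∈ s, ∀ j ∉ s, M i j = 0 := by
  simp only [BlockTriangular, lt_iff_le_not_ge, le_Prop_eq]
  grind

protected theorem BlockTriangular.smul {S α : Type*} [LinearOrder α] [Zero R] [SMulZeroClass S R]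
    {M : Matrix m m R} {b : m → α} (hM : M.BlockTriangular b) (c : S) :
    (c • M).BlockTriangular b :=
  fun _ _ h => by simp [hM h]

end Matrix

theorem stmt10_general {n : ℕ} (L : Matrix (Fin n) (Fin n) ℝ)
    (hEEP : EvExpPos (-L)) :
    MatIrreducible L := by
  rintro ⟨S, ⟨i, hi⟩, hSne, hS⟩
  obtain ⟨j, hj⟩ : ∃ j, j ∉ S := by simpa [Finset.eq_univ_iff_forall] using hSne
  obtain ⟨t, -, hpos⟩ := hEEP
  have hL : L.BlockTriangular (· ∈ (S : Set (Fin n))) := blockTriangular_mem_iff.2 hS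
  have hexp := blockTriangular_mem_iff.1 (hL.neg.smul t).exp
  exact (hpos t le_rfl i j).ne' (hexp i hi j hj)

/-- If `-L` is eventually exponentially positive (with `L·1 = 0`), then `L` is irreducible. -/
theorem stmt10 {n : ℕ} (L : Matrix (Fin n) (Fin n) ℝ)
    (hL : L *ᵥ ones n = 0) (hEEP : EvExpPos (-L)) :
    MatIrreducible L :=
  stmt10_general L hEEP
end
end

section
/- If L ∈ ℝ^{n×n}, n ≥ 2, is weight balanced (L·1 = L^T·1 = 0) with dim ker L = 1, then L is irreducible. -/
/-!
If `L` vanishes on the block `S × Sᶜ`, the principal submatrix `C` of `L` on `Sᶜ` inherits the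
vanishing column sums of `L`, so `C` is singular. A nonzero kernel vector of `C`, extended by zero
on `S`, lies in the kernel of `L` and vanishes on `S`, so it is not a multiple of the all-ones
vector, which also lies in that kernel: the kernel has dimension at least two.
-/

open Matrix Filter Polynomial Topology

noncomputable section

namespace Matrix

abbrev complSubmatrix {R ι : Type*} (M : Matrix ι ι R) (S : Finset ι) :
    Matrix {j // j ∉ S} {j // j ∉ S} R :=
  M.submatrix Subtype.val Subtype.val

variable {R ι : Type*} [Fintype ι] [DecidableEq ι] {S : Finset ι} (M : Matrix ι ι R)

lemma one_vecMul_complSubmatrix_eq_zero [NonAssocSemiring R]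
    (hM : ∀ i ∈ S, ∀ j ∉ S, M i j = 0) (h : (1 : ι → R) ᵥ* M = 0) :
    (1 : {j // j ∉ S} → R) ᵥ* M.complSubmatrix S = 0 := by
  ext j
  have hj := congrFun h j
  simp only [vecMul, dotProduct, Pi.one_apply, one_mul, Pi.zero_apply] at hj ⊢
  rw [← Fintype.sum_subtype_add_sum_subtype (· ∈ S)] at hj
  simpa [Finset.sum_eq_zero fun (i : {i // i ∈ S}) _ => hM i i.2 j j.2] using hj

lemma mulVec_extend_by_zero_eq_zero [NonUnitalNonAssocSemiring R]
    (hM : ∀ i ∈ S, ∀ j ∉ S, M i j = 0) {z : {j // j ∉ S} → R}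
    (hz : M.complSubmatrix S *ᵥ z = 0) :
    M *ᵥ (fun i => if h : i ∈ S then 0 else z ⟨i, h⟩) = 0 := by
  ext i
  simp only [mulVec, dotProduct, Pi.zero_apply]
  rw [← Fintype.sum_subtype_add_sum_subtype (· ∈ S), Finset.sum_eq_zero fun j _ => by rw [dif_pos j.2, mul_zero], zero_add]
  refine (Finset.sum_congr rfl fun j _ => by rw [dif_neg j.2]).trans ?_
  by_cases hi : i ∈ S
  · exact Finset.sum_eq_zero fun j _ => by rw [hM i hi j j.2, zero_mul]
  · exact congrFun hz ⟨i, hi⟩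

lemma exists_mulVec_eq_zero_of_vanishing_block [CommRing R] [IsDomain R]
    (hM : ∀ i ∈ S, ∀ j ∉ S, M i j = 0) (h : (1 : ι → R) ᵥ* M = 0) (hS : ∃ j, j ∉ S) :
    ∃ x ≠ 0, M *ᵥ x = 0 ∧ ∀ i ∈ S, x i = 0 := by
  obtain ⟨j₀, hj₀⟩ := hS
  have hdet : (M.complSubmatrix S).det = 0 :=
    exists_vecMul_eq_zero_iff.mp
      ⟨1, fun h1 => one_ne_zero (congrFun h1 ⟨j₀, hj₀⟩),
        M.one_vecMul_complSubmatrix_eq_zero hM h⟩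
  obtain ⟨z, hz0, hz⟩ := exists_mulVec_eq_zero_iff.mpr hdet
  refine ⟨_, ?_, M.mulVec_extend_by_zero_eq_zero hM hz, fun i hi => dif_pos hi⟩
  obtain ⟨k, hk⟩ := Function.ne_iff.mp hz0
  exact Function.ne_iff.mpr ⟨k, by simpa [k.2] using hk⟩

end Matrix

theorem stmt11_general {n : ℕ} (L : Matrix (Fin n) (Fin n) ℝ)
    (h1 : L *ᵥ ones n = 0) (h2 : Lᵀ *ᵥ ones n = 0)
    (hcor : Module.finrank ℝ (LinearMap.ker L.mulVecLin) = 1) :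
    MatIrreducible L := by
  rintro ⟨S, ⟨i₀, hi₀⟩, hS, hL⟩
  obtain ⟨x, hx0, hLx, hxS⟩ := L.exists_mulVec_eq_zero_of_vanishing_block hL
    (by rwa [← mulVec_transpose]) (by simpa [Finset.eq_univ_iff_forall] using hS)
  let one : LinearMap.ker L.mulVecLin := ⟨ones n, h1⟩
  have hone : one ≠ 0 := fun h => one_ne_zero (congrFun (congrArg Subtype.val h) i₀)
  obtain ⟨c, hc⟩ := (finrank_eq_one_iff_of_nonzero' one hone).mp hcor ⟨x, hLx⟩
  have hc0 : c = 0 := by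
    simpa [one, ones, hxS i₀ hi₀] using congrFun (congrArg Subtype.val hc) i₀
  exact hx0 (by simpa [hc0] using (congrArg Subtype.val hc).symm)

/-- A weight balanced Laplacian with one-dimensional kernel is irreducible. -/
theorem stmt11 {n : ℕ} (hn : 2 ≤ n) (L : Matrix (Fin n) (Fin n) ℝ)
    (h1 : L *ᵥ ones n = 0) (h2 : Lᵀ *ᵥ ones n = 0)
    (hcor : Module.finrank ℝ (LinearMap.ker L.mulVecLin) = 1) :
    MatIrreducible L :=
  stmt11_general L h1 h2 hcor
end
end
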